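/- Let E ⊂ [0,1]ⁿ be nonempty with 0 ∈ E, and suppose E is α-porous down to scale r₀ for some 0 < r₀ < 1. Then there exist positive integers k = k(α) and k′ = k′(n) such that for every integer N ≥ 0 with 2^{−(N+1)(k+k′)} ≥ r₀ (so in particular N ≤ −log₂(r₀)/(k+k′)): (i) Vol(E) ≤ (1 − 2^{−(k+k′)})^N; and (ii) there exist ε = ε(α,n) > 0 and c = c(n,α) ∈ (0,1) such that M^{n−ε}_{r₀}(E) ≤ (1 − c)^N, where for s > 0, M^{s}_{r₀}(E) = inf{ Σ_i r^{s} : r ≥ r₀, x_i ∈ E, E ⊂ ∪_i B_r(x_i) } is the infimum over coverings of E by balls of a common radius r ≥ r₀ centered in E. -/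

import Mathlib

open Metric MeasureTheory Set Filter
open scoped ENNReal NNReal RealInnerProductSpace

noncomputable section

/-- Euclidean space `ℝⁿ`. -/
abbrev En (n : ℕ) := EuclideanSpace ℝ (Fin n)

variable {n : ℕ}

/-- The `(n-1)`-dimensional surface measure on the sphere of center `p` and radius `r`,
realized as the restriction of the `(n-1)`-dimensional Hausdorff measure. -/
def sphMeasure (n : ℕ) (p : En n) (r : ℝ) : Measure (En n) :=
  (μH[(n : ℝ) - 1]).restrict (sphere p r)

/-- The Laplacian of `f` at `x` (junk values where `f` is not twice differentiable). -/
def lapl (f : En n → ℝ) (x : En n) : ℝ :=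
  ∑ i : Fin n,
    fderiv ℝ (fun y => fderiv ℝ f y (EuclideanSpace.single i 1)) x (EuclideanSpace.single i 1)

/-- `H(r,p,f) = ∫_{∂B_r(p)} |f - f(p)|² dσ`. -/
def Hfn (r : ℝ) (p : En n) (f : En n → ℝ) : ℝ :=
  ∫ y, (f y - f p) ^ 2 ∂(sphMeasure n p r)

/-- `D(r,p,f) = ∫_{B_r(p)} |∇f|² dx`. -/
def Dfn (r : ℝ) (p : En n) (f : En n → ℝ) : ℝ :=
  ∫ x in ball p r, ‖gradient f x‖ ^ 2

/-- The Almgren frequency `N(r,p,f) = r·D(r,p,f)/H(r,p,f)`. -/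
def Nfn (r : ℝ) (p : En n) (f : En n → ℝ) : ℝ :=
  r * Dfn r p f / Hfn r p f

/-- The normalized rescaling `T_{p,r} f`. -/
def Tresc (p : En n) (r : ℝ) (f : En n → ℝ) : En n → ℝ := fun y =>
  (f (p + r • y) - f p) /
    Real.sqrt (⨍ z, (f (p + r • z) - f p) ^ 2 ∂(sphMeasure n 0 1))

/-- `λ(p,r,f) = (∫_{∂B_r(p)} (f(y)−f(p)) ∇f(y)·(y−p) dσ(y)) / H(r,p,f)`. -/
def lambdaFn (p : En n) (r : ℝ) (f : En n → ℝ) : ℝ :=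
  (∫ y, (f y - f p) * (inner ℝ (gradient f y) (y - p) : ℝ) ∂(sphMeasure n p r)) / Hfn r p f

/-- `P` is a homogeneous harmonic polynomial of degree `d`. -/
def IsHomHarmPoly (P : En n → ℝ) (d : ℕ) : Prop :=
  (∃ q : MvPolynomial (Fin n) ℝ, ∀ x : En n, P x = MvPolynomial.eval (fun i => x i) q) ∧
  (∀ t : ℝ, 0 < t → ∀ x : En n, P (t • x) = t ^ d * P x) ∧
  (∀ x, lapl P x = 0)

/-- `f` is 0-symmetric: `f = c·P⁺ − P⁻` for some `c > 0` and some nonconstant homogeneous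
harmonic polynomial `P`. -/
def ZeroSymm (f : En n → ℝ) : Prop :=
  ∃ (c : ℝ) (P : En n → ℝ) (d : ℕ), 0 < c ∧ 1 ≤ d ∧ IsHomHarmPoly P d ∧ (∃ x, P x ≠ 0) ∧
    ∀ x, f x = c * max (P x) 0 - max (-P x) 0

/-- `f` is k-symmetric: 0-symmetric and translation invariant along a `k`-dimensional
linear subspace. -/
def KSymm (k : ℕ) (f : En n → ℝ) : Prop :=
  ZeroSymm f ∧ ∃ V : Submodule ℝ (En n), Module.finrank ℝ V = k ∧
    ∀ x : En n, ∀ y ∈ V, f (x + y) = f x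

/-- `f` is `(k,ε,r,p)`-symmetric. -/
def QSymm (k : ℕ) (ε r : ℝ) (p : En n) (f : En n → ℝ) : Prop :=
  ∃ P : En n → ℝ, KSymm k P ∧
    (⨍ z, (P z) ^ 2 ∂(sphMeasure n 0 1)) = 1 ∧
    (⨍ x in ball (0 : En n) 1, (Tresc p r f x - P x) ^ 2) < ε

/-- Quantitative stratum `S^k_{ε,r}(f)`. -/
def stratum (k : ℕ) (ε r : ℝ) (f : En n → ℝ) : Set (En n) :=
  {x | ∀ s : ℝ, r ≤ s → 0 < s → ¬ QSymm (k + 1) ε s x f}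

/-- Qualitative stratum `S^k(f) = ∪_{ε>0} S^k_ε(f)`. -/
def stratumQual (k : ℕ) (f : En n → ℝ) : Set (En n) :=
  ⋃ ε > (0 : ℝ), stratum k ε 0 f

/-- Upper Minkowski `s`-content. -/
def minkContent (n : ℕ) (s : ℝ) (A : Set (En n)) : ℝ≥0∞ :=
  Filter.limsup
    (fun r : ℝ => volume (Metric.thickening r A) / ENNReal.ofReal (2 * r) ^ ((n : ℝ) - s))
    (nhdsWithin 0 (Set.Ioi 0))

/-- Upper Minkowski dimension. -/
def minkDim (n : ℕ) (A : Set (En n)) : ℝ :=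
  sInf {s : ℝ | minkContent n s A = 0}

/-- Squared Jones beta-number `β^k_{μ,2}(p,r)²`. -/
def betaSq (k : ℕ) (μ : Measure (En n)) (p : En n) (r : ℝ) : ℝ :=
  sInf {b : ℝ | ∃ L : AffineSubspace ℝ (En n), (L : Set (En n)).Nonempty ∧
    Module.finrank ℝ L.direction = k ∧
    b = (1 / r ^ k) * ∫ x in ball p r, (infDist x (L : Set (En n)) / r) ^ 2 ∂μ}

/-- The local `C^{0,α}` norm of `g` on a set `s`. -/
def holderNormOn (a : ℝ) (g : En n → ℝ) (s : Set (En n)) : ℝ :=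
  sSup ((fun x => |g x|) '' s) +
    sSup {c : ℝ | ∃ x ∈ s, ∃ y ∈ s, x ≠ y ∧ c = |g x - g y| / dist x y ^ a}

/-- `Ω` is an (unbounded, `R₀ = ∞`) NTA domain with constant `M`. -/
structure IsNTA (Ω : Set (En n)) (M : ℝ) : Prop where
  corkscrew : ∀ Q ∈ frontier Ω, ∀ r > (0 : ℝ),
    ∃ A ∈ Ω, dist A Q < r ∧ ball A (r / M) ⊆ Ω
  corkscrew_ext : ∀ Q ∈ frontier Ω, ∀ r > (0 : ℝ),
    ∃ A ∈ (closure Ω)ᶜ, dist A Q < r ∧ ball A (r / M) ⊆ (closure Ω)ᶜ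
  harnack : ∀ ε > (0 : ℝ), ∀ k : ℕ, 1 ≤ k → ∀ x₁ ∈ Ω, ∀ x₂ ∈ Ω,
    ε < infDist x₁ (frontier Ω) → ε < infDist x₂ (frontier Ω) →
    dist x₁ x₂ ≤ 2 ^ k * ε →
    ∃ (N : ℕ) (c : ℕ → En n) (ρ : ℕ → ℝ), 0 < N ∧ (N : ℝ) ≤ M * k ∧
      x₁ ∈ ball (c 0) (ρ 0) ∧ x₂ ∈ ball (c (N - 1)) (ρ (N - 1)) ∧
      (∀ i < N, ball (c i) (ρ i) ⊆ Ω) ∧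
      (∀ i < N,
        (1 / M) * min (infDist x₁ (frontier Ω)) (infDist x₂ (frontier Ω)) ≤ 2 * ρ i) ∧
      (∀ i, i + 1 < N → (ball (c i) (ρ i) ∩ ball (c (i + 1)) (ρ (i + 1))).Nonempty)

/-- All the data defining a member of the class `𝒜(Λ,α,M₀)` (except the frequency bound):
a pair of complementary unbounded two-sided NTA domains, Green's functions with pole at
infinity, harmonic measures, and the Radon–Nikodym derivative `h` with `h(0) = 1`. -/
structure GreenData (n : ℕ) (α M₀ : ℝ) where
  Ωp : Set (En n)
  up : En n → ℝ
  um : En n → ℝ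
  ωp : Measure (En n)
  ωm : Measure (En n)
  h : En n → ℝ
  Ωp_open : IsOpen Ωp
  nta_p : IsNTA Ωp M₀
  nta_m : IsNTA (closure Ωp)ᶜ M₀
  unbounded_p : ¬ Bornology.IsBounded Ωp
  unbounded_m : ¬ Bornology.IsBounded (closure Ωp)ᶜ
  bdry_eq : frontier ((closure Ωp)ᶜ) = frontier Ωp
  zero_bdry : (0 : En n) ∈ frontier Ωp
  up_cont : Continuous up
  um_cont : Continuous um
  up_pos : ∀ x ∈ Ωp, 0 < up x
  um_pos : ∀ x ∈ (closure Ωp)ᶜ, 0 < um x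
  up_smooth : ContDiffOn ℝ (⊤ : ℕ∞) up Ωp
  um_smooth : ContDiffOn ℝ (⊤ : ℕ∞) um (closure Ωp)ᶜ
  up_harm : ∀ x ∈ Ωp, lapl up x = 0
  um_harm : ∀ x ∈ (closure Ωp)ᶜ, lapl um x = 0
  up_zero : ∀ x ∉ Ωp, up x = 0
  um_zero : ∀ x ∉ (closure Ωp)ᶜ, um x = 0
  ωp_radon : ∀ K : Set (En n), IsCompact K → ωp K < ⊤
  ωm_radon : ∀ K : Set (En n), IsCompact K → ωm K < ⊤
  ωp_supp : ∀ s : Set (En n), s ∩ frontier Ωp = ∅ → ωp s = 0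
  ωm_supp : ∀ s : Set (En n), s ∩ frontier Ωp = ∅ → ωm s = 0
  green_p : ∀ φ : En n → ℝ, ContDiff ℝ (⊤ : ℕ∞) φ → HasCompactSupport φ →
    ∫ x, up x * lapl φ x = ∫ x, φ x ∂ωp
  green_m : ∀ φ : En n → ℝ, ContDiff ℝ (⊤ : ℕ∞) φ → HasCompactSupport φ →
    ∫ x, um x * lapl φ x = ∫ x, φ x ∂ωm
  h_pos : ∀ x ∈ frontier Ωp, 0 < h x
  rn : ωm = ωp.withDensity fun x => ENNReal.ofReal (h x)
  h_zero : h 0 = 1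

namespace GreenData

variable {α M₀ : ℝ}

/-- The exterior domain `Ω⁻`. -/
def Ωm (P : GreenData n α M₀) : Set (En n) := (closure P.Ωp)ᶜ

/-- The common boundary `∂Ω±`. -/
def bdry (P : GreenData n α M₀) : Set (En n) := frontier P.Ωp

/-- The function `v = u⁺ − u⁻`. -/
def v (P : GreenData n α M₀) : En n → ℝ := fun x => P.up x - P.um x

/-- The local Hölder norm `‖ln h‖_α` on `∂Ω± ∩ B₂(0)`. -/
def loghNorm (P : GreenData n α M₀) : ℝ :=
  holderNormOn α (fun x => Real.log (P.h x)) (P.bdry ∩ ball (0 : En n) 2)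

end GreenData

/-- Porosity constant `P(E,x,r)`. -/
def porosityAt (E : Set (En n)) (x : En n) (r : ℝ) : ℝ :=
  sSup (insert 0 {t : ℝ | 0 < t ∧ ∃ y ∈ ball x r, ball y t ⊆ ball x r \ E})

/-- `E` is `a`-porous down to scale `r₀`. -/
def PorousDownTo (a r₀ : ℝ) (E : Set (En n)) : Prop :=
  ∀ x ∈ E, ∀ r : ℝ, r₀ ≤ r → a < porosityAt E x r / r

/-- `E` is `a`-porous. -/
def IsPorous (a : ℝ) (E : Set (En n)) : Prop :=
  ∀ x ∈ E, a < Filter.liminf (fun r => porosityAt E x r / r) (nhdsWithin 0 (Set.Ioi 0))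

/-- `M^s_{r₀}(E)`: infimum of `(#balls)·r^s` over coverings of `E` by balls of a common
radius `r ≥ r₀` centered in `E`. -/
def minkPreContent (n : ℕ) (s r₀ : ℝ) (E : Set (En n)) : ℝ :=
  sInf {t : ℝ | ∃ (r : ℝ) (X : Finset (En n)), r₀ ≤ r ∧ (↑X : Set (En n)) ⊆ E ∧
    (E ⊆ ⋃ x ∈ X, ball x r) ∧ t = (X.card : ℝ) * r ^ s}

end

lemma hole_of_porosity {n : ℕ} {E : Set (En n)} {x : En n} {a r : ℝ}
    (hp : a * r < porosityAt E x r) :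
    ∃ y : En n, ball y (a * r) ⊆ ball x r \ E := by
  obtain ⟨b, hb, hab⟩ := exists_lt_of_lt_csSup ⟨0, mem_insert _ _⟩ hp
  rcases hb with rfl | ⟨hbpos, y, hy, hsub⟩
  · exact ⟨x, by rw [ball_eq_empty.2 hab.le]; exact empty_subset _⟩
  · exact ⟨y, (ball_subset_ball hab.le).trans hsub⟩

lemma decay_step {n : ℕ} (hn : 0 < n) {a : ℝ} (ha : 0 < a) (ha1 : a ≤ 1)
    {E : Set (En n)} (hE : Bornology.IsBounded E) {r ρ : ℝ} (hr : 0 < r)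
    (hρ0 : 0 < ρ) (hρ : ρ ≤ a / 2)
    (hpor : ∀ x ∈ E, a * r < porosityAt E x r) :
    volume (thickening (ρ * r) E) ≤
      ENNReal.ofReal (1 - (a / 8) ^ n) * volume (thickening r E) := by
  classical
  have hnt : Nontrivial (En n) := by
    have := Fin.pos_iff_nonempty.1 hn
    exact ⟨0, EuclideanSpace.single this.some 1, fun h => by
      have := congrFun (congrArg (fun f : En n => (f : Fin n → ℝ)) h) this.some
      simp [EuclideanSpace.single_apply] at this⟩
  -- Vitali
  obtain ⟨u, huE, hdisj, hcov⟩ :=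
    Vitali.exists_disjoint_subfamily_covering_enlargement_closedBall E (id : En n → En n)
      (fun _ => r) r (fun _ _ => le_rfl) 4 (by norm_num)
  -- choose holes
  have hhole : ∀ b ∈ u, ∃ y : En n, ball y (a * r) ⊆ ball b r \ E :=
    fun b hb => hole_of_porosity (hpor b (huE hb))
  choose! y hy using hhole
  set core : En n → Set (En n) := fun b => ball (y b) (a * r / 2) with hcore
  have hcore_sub : ∀ b ∈ u, core b ⊆ ball b r := fun b hb =>
    (ball_subset_ball (by nlinarith)).trans ((hy b hb).trans diff_subset)
  have hcdisj : u.PairwiseDisjoint core := by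
    refine hdisj.mono_on fun b hb => ?_
    exact (hcore_sub b hb).trans ball_subset_closedBall
  have hucount : u.Countable := by
    refine hcdisj.countable_of_isOpen (fun b _ => isOpen_ball) fun b hb => ?_
    exact nonempty_ball.2 (by positivity)
  have hmeas_core : ∀ b ∈ u, MeasurableSet (core b) := fun b _ => measurableSet_ball
  -- the union of cores
  set U : Set (En n) := ⋃ b ∈ u, core b with hU
  have hUmeas : MeasurableSet U := by
    exact MeasurableSet.biUnion hucount hmeas_core
  have hUsub : U ⊆ thickening r E := by
    refine iUnion₂_subset fun b hb => (hcore_sub b hb).trans ?_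
    rw [thickening_eq_biUnion_ball]
    exact subset_biUnion_of_mem (u := fun x : En n => ball x r) (huE hb)
  -- cores avoid the small thickening
  have hUdisj : Disjoint (thickening (ρ * r) E) U := by
    rw [Set.disjoint_iff_inter_eq_empty]
    ext z; simp only [mem_inter_iff, mem_empty_iff_false, iff_false]
    rintro ⟨hz1, hz2⟩
    simp only [hU, mem_iUnion] at hz2
    obtain ⟨b, hb, hzb⟩ := hz2
    obtain ⟨e, he, hze⟩ := mem_thickening_iff.1 hz1
    have h1 : dist z (y b) < a * r / 2 := mem_ball.1 hzb
    have h2 : dist z e < ρ * r := hze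
    have : e ∈ ball (y b) (a * r) := by
      rw [mem_ball]
      calc dist e (y b) ≤ dist e z + dist z (y b) := dist_triangle _ _ _
        _ < ρ * r + a * r / 2 := by rw [dist_comm e z]; exact add_lt_add h2 h1
        _ ≤ a/2 * r + a * r / 2 := by nlinarith
        _ = a * r := by ring
    exact ((hy b hb) this).2 he
  -- volume of thickening r E is bounded by sum of enlarged balls
  have hthick_sub : thickening r E ⊆ ⋃ b ∈ u, closedBall b (4 * r) := by
    rw [thickening_eq_biUnion_ball]
    refine iUnion₂_subset fun x hx => ?_
    obtain ⟨b, hb, hsub⟩ := hcov x hx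
    exact (ball_subset_closedBall.trans hsub).trans
      (subset_biUnion_of_mem (u := fun b : En n => closedBall b (4*r)) hb)
  set ω := volume (ball (0 : En n) 1) with hω
  have hfinV : volume (thickening r E) ≠ ∞ := hE.thickening.measure_lt_top.ne
  have key : ENNReal.ofReal ((a/8)^n) * volume (thickening r E) ≤ volume U := by
    have h1 : volume (thickening r E) ≤ ∑' b : u, volume (closedBall (b : En n) (4*r)) :=
      (measure_mono hthick_sub).trans (measure_biUnion_le volume hucount _)
    calc ENNReal.ofReal ((a/8)^n) * volume (thickening r E)
        ≤ ENNReal.ofReal ((a/8)^n) * ∑' b : u, volume (closedBall (b : En n) (4*r)) :=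
          mul_le_mul_right h1 _
      _ = ∑' b : u, ENNReal.ofReal ((a/8)^n) * volume (closedBall (b : En n) (4*r)) :=
          ENNReal.tsum_mul_left.symm
      _ = ∑' b : u, volume (core (b : En n)) := by
          refine tsum_congr fun b => ?_
          rw [Measure.addHaar_closedBall _ _ (by positivity : (0:ℝ) ≤ 4*r),
            hcore]
          simp only []
          rw [Measure.addHaar_ball _ _ (by positivity : (0:ℝ) ≤ a*r/2),
            finrank_euclideanSpace_fin, ← mul_assoc, ← ENNReal.ofReal_mul (by positivity),
            ← mul_pow]
          norm_num
          ring_nf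
      _ = volume U := (measure_biUnion hucount hcdisj hmeas_core).symm
  have hsum : volume (thickening (ρ*r) E) + ENNReal.ofReal ((a/8)^n) * volume (thickening r E)
      ≤ volume (thickening r E) := by
    calc volume (thickening (ρ*r) E) + ENNReal.ofReal ((a/8)^n) * volume (thickening r E)
        ≤ volume (thickening (ρ*r) E) + volume U := add_le_add le_rfl key
      _ = volume (thickening (ρ*r) E ∪ U) := (measure_union hUdisj hUmeas).symm
      _ ≤ volume (thickening r E) := by
          refine measure_mono (union_subset (thickening_mono ?_ E) hUsub)
          nlinarith
  have hδ1 : (a/8)^n ≤ 1 := pow_le_one₀ (by positivity) (by linarith)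
  have hsplit : volume (thickening r E) =
      ENNReal.ofReal (1 - (a/8)^n) * volume (thickening r E) +
        ENNReal.ofReal ((a/8)^n) * volume (thickening r E) := by
    rw [← add_mul, ← ENNReal.ofReal_add (by linarith) (by positivity), sub_add_cancel,
      ENNReal.ofReal_one, one_mul]
  nth_rewrite 2 [hsplit] at hsum
  exact (ENNReal.add_le_add_iff_right (ENNReal.mul_ne_top ENNReal.ofReal_ne_top hfinV)).1 hsum

lemma counting_step {n : ℕ} (hn : 0 < n)
    {E : Set (En n)} (hE : Bornology.IsBounded E) {R : ℝ} (hR : 0 < R) :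
    ∃ X : Finset (En n), (↑X : Set (En n)) ⊆ E ∧ (E ⊆ ⋃ x ∈ X, ball x R) ∧
      (X.card : ℝ≥0∞) * (ENNReal.ofReal ((R/6)^n) * volume (ball (0 : En n) 1)) ≤
        volume (thickening R E) := by
  classical
  set v : ℝ≥0∞ := ENNReal.ofReal ((R/6)^n) * volume (ball (0 : En n) 1) with hv
  have hnt : Nontrivial (En n) := by
    have := Fin.pos_iff_nonempty.1 hn
    exact ⟨0, EuclideanSpace.single this.some 1, fun h => by
      have := congrFun (congrArg (fun f : En n => (f : Fin n → ℝ)) h) this.some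
      simp [EuclideanSpace.single_apply] at this⟩
  obtain ⟨u, huE, hdisj, hcov⟩ :=
    Vitali.exists_disjoint_subfamily_covering_enlargement_closedBall E (id : En n → En n)
      (fun _ => R/6) (R/6) (fun _ _ => le_rfl) 4 (by norm_num)
  have hvball : ∀ b : En n, volume (closedBall b (R/6)) = v := fun b => by
    rw [Measure.addHaar_closedBall _ _ (by positivity : (0:ℝ) ≤ R/6),
      finrank_euclideanSpace_fin]
  have hvpos : v ≠ 0 := by
    rw [hv]
    exact mul_ne_zero (by simp [ENNReal.ofReal_pos]; positivity)
      (measure_ball_pos _ _ one_pos).ne'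
  have hvne : v ≠ ∞ :=
    ENNReal.mul_ne_top ENNReal.ofReal_ne_top (measure_ball_lt_top).ne
  have hsubA : ∀ b ∈ u, closedBall b (R/6) ⊆ thickening R E := fun b hb => by
    refine (closedBall_subset_ball (show R/6 < R by linarith)).trans ?_
    rw [thickening_eq_biUnion_ball]
    exact subset_biUnion_of_mem (u := fun x : En n => ball x R) (huE hb)
  have hAfin : volume (thickening R E) ≠ ∞ := hE.thickening.measure_lt_top.ne
  -- u is finite
  have hufin : u.Finite := by
    by_contra hinf
    rw [← Set.not_infinite, not_not] at hinf
    obtain ⟨K, hK⟩ := ENNReal.exists_nat_gt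
      (ENNReal.div_lt_top hAfin hvpos).ne
    obtain ⟨t, htu, htcard⟩ := hinf.exists_subset_card_eq K
    have hle : (t.card : ℝ≥0∞) * v ≤ volume (thickening R E) := by
      have := measure_biUnion_finset (μ := volume)
        ((hdisj.subset htu).mono_on fun b _ => le_rfl)
        (fun b _ => measurableSet_closedBall)
      calc (t.card : ℝ≥0∞) * v = ∑ b ∈ t, volume (closedBall b (R/6)) := by
            simp [hvball, Finset.sum_const, mul_comm]
        _ = volume (⋃ b ∈ t, closedBall b (R/6)) := this.symm
        _ ≤ volume (thickening R E) :=
            measure_mono (iUnion₂_subset fun b hb => hsubA b (htu hb))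
    rw [htcard] at hle
    have hlt : volume (thickening R E) < (K:ℝ≥0∞) * v :=
      (ENNReal.div_lt_iff (Or.inl hvpos) (Or.inl hvne)).1 hK
    exact absurd hle (not_le.2 hlt)
  refine ⟨hufin.toFinset, by simpa using huE, ?_, ?_⟩
  · intro x hx
    obtain ⟨b, hb, hsub⟩ := hcov x hx
    have : x ∈ closedBall b (4*(R/6)) := hsub (mem_closedBall_self (by positivity))
    simp only [mem_iUnion]
    exact ⟨b, by simpa using hb, mem_ball.2 (by rw [mem_closedBall] at this; linarith)⟩
  · have := measure_biUnion_finset (μ := volume)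
      ((hdisj.subset (by simp : ↑hufin.toFinset ⊆ u)).mono_on fun b _ => le_rfl)
      (fun (b : En n) _ => measurableSet_closedBall)
    calc (hufin.toFinset.card : ℝ≥0∞) * v
        = ∑ b ∈ hufin.toFinset, volume (closedBall b (R/6)) := by
          simp [hvball, Finset.sum_const, mul_comm]
      _ = volume (⋃ b ∈ hufin.toFinset, closedBall b (R/6)) := this.symm
      _ ≤ volume (thickening R E) :=
          measure_mono (iUnion₂_subset fun b hb => hsubA b (by simpa using hb))

lemma cube_vol_le {n : ℕ} {E : Set (EuclideanSpace ℝ (Fin n))}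
    (hE : ∀ x ∈ E, ∀ i : Fin n, x i ∈ Set.Icc (0 : ℝ) 1) : volume E ≤ 1 := by
  have hsub : E ⊆ (MeasurableEquiv.toLp 2 (Fin n → ℝ)).symm ⁻¹'
      (Set.pi Set.univ fun _ => Set.Icc (0:ℝ) 1) := by
    intro x hx
    simp only [Set.mem_preimage, Set.mem_pi, Set.mem_univ, forall_true_left]
    have hid : ((MeasurableEquiv.toLp 2 (Fin n → ℝ)).symm x) = (x : Fin n → ℝ) := rfl
    rw [hid]
    exact fun i => hE x hx i
  refine (measure_mono hsub).trans ?_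
  rw [(EuclideanSpace.volume_preserving_symm_measurableEquiv_toLp (Fin n)).measure_preimage
    ((MeasurableSet.univ_pi fun _ => measurableSet_Icc).nullMeasurableSet)]
  rw [volume_pi_pi]
  simp [Real.volume_Icc]

set_option maxHeartbeats 2000000 in
/-- McCurdy, Lemma 12.2 (Appendix A): volume and pre-Minkowski-content decay for sets that
are porous down to a scale. -/
theorem statement18 (n : ℕ) (hn : 0 < n) (a : ℝ) (ha : 0 < a) :
    ∃ (k k' : ℕ) (ε c : ℝ), 0 < k ∧ 0 < k' ∧ 0 < ε ∧ 0 < c ∧ c < 1 ∧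
      ∀ (E : Set (En n)) (r₀ : ℝ), E.Nonempty → (0 : En n) ∈ E →
        (∀ x ∈ E, ∀ i : Fin n, x i ∈ Set.Icc (0 : ℝ) 1) →
        0 < r₀ → r₀ < 1 → PorousDownTo a r₀ E →
        ∀ N : ℕ, r₀ ≤ 2 ^ (-(((N + 1) * (k + k') : ℕ) : ℤ)) →
          volume E ≤ ENNReal.ofReal ((1 - 2 ^ (-((k + k' : ℕ) : ℤ)) : ℝ) ^ N) ∧
          minkPreContent n ((n : ℝ) - ε) r₀ E ≤ (1 - c) ^ N := by
  classical
  -- basic constants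
  set a' : ℝ := min a 1 with ha'def
  have ha'0 : 0 < a' := lt_min ha one_pos
  have ha'1 : a' ≤ 1 := min_le_right _ _
  set δ : ℝ := (a' / 8) ^ n with hδdef
  have hδ0 : 0 < δ := by positivity
  have hδ8 : δ ≤ 1 / 8 := by
    calc δ ≤ (1/8 : ℝ) ^ n := by
          refine pow_le_pow_left₀ (by positivity) (by linarith) n
      _ ≤ (1/8 : ℝ) ^ 1 := by
          refine pow_le_pow_of_le_one (by norm_num) (by norm_num) hn
      _ = 1/8 := pow_one _
  set b : ℝ := 1 - δ with hbdef
  have hb0 : 0 < b := by simp only [hbdef]; linarith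
  have hb78 : 7/8 ≤ b := by simp only [hbdef]; linarith
  have hb1 : b < 1 := by simp only [hbdef]; linarith
  -- m₀
  obtain ⟨j₀, hj₀⟩ := exists_pow_lt_of_lt_one (show (0:ℝ) < a'/2 by positivity)
    (show (1/2 : ℝ) < 1 by norm_num)
  set m₀ : ℕ := j₀ + 1 with hm₀def
  set ρ₀ : ℝ := (1/2 : ℝ) ^ m₀ with hρ₀def
  have hρ₀pos : 0 < ρ₀ := by positivity
  have hρ₀le : ρ₀ ≤ a' / 2 := by
    calc ρ₀ = (1/2:ℝ)^(j₀+1) := rfl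
      _ ≤ (1/2:ℝ)^j₀ := by
          refine pow_le_pow_of_le_one (by norm_num) (by norm_num) (Nat.le_succ _)
      _ ≤ a'/2 := hj₀.le
  have hρ₀le1 : ρ₀ ≤ 1 := by
    refine pow_le_one₀ (by norm_num) (by norm_num)
  -- volume constants
  set ωr : ℝ := (volume (ball (0 : En n) 1)).toReal with hωdef
  have hω0 : 0 < ωr := by
    refine ENNReal.toReal_pos (measure_ball_pos _ _ one_pos).ne' measure_ball_lt_top.ne
  set C₀ : ℝ := max 1 (((n:ℝ)+1)^n * ωr) with hC₀def
  have hC₀1 : 1 ≤ C₀ := le_max_left _ _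
  set C₂ : ℝ := max 1 (C₀ * 6^n / ωr) with hC₂def
  have hC₂1 : 1 ≤ C₂ := le_max_left _ _
  -- choose s
  obtain ⟨j₁, hj₁⟩ := exists_pow_lt_of_lt_one
    (show (0:ℝ) < 1/(8*C₀*C₂) by positivity) hb1
  set s : ℕ := j₁ + 2 with hsdef
  have hbs : b ^ (s-1) ≤ 1/(8*C₀*C₂) := by
    calc b ^ (s-1) = b^(j₁+1) := rfl
      _ ≤ b^j₁ := pow_le_pow_of_le_one hb0.le hb1.le (Nat.le_succ _)
      _ ≤ _ := hj₁.le
  have hbs' : b ^ s ≤ 1/(8*C₀*C₂) := by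
    calc b ^ s = b^(j₁+2) := rfl
      _ ≤ b^j₁ := pow_le_pow_of_le_one hb0.le hb1.le (by omega)
      _ ≤ _ := hj₁.le
  set m : ℕ := s * m₀ with hmdef
  have hm2 : 2 ≤ m := by
    have : 1 ≤ m₀ := by omega
    calc 2 ≤ s := by omega
      _ = s * 1 := (mul_one s).symm
      _ ≤ s * m₀ := by exact Nat.mul_le_mul_left s this
  -- epsilon
  set ε : ℝ := Real.logb 2 b⁻¹ / m with hεdef
  have hlogb : 0 < Real.logb 2 b⁻¹ :=
    Real.logb_pos one_lt_two ((one_lt_inv₀ hb0).2 hb1)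
  have hε0 : 0 < ε := div_pos hlogb (by positivity)
  refine ⟨1, m - 1, ε, 1/2, one_pos, by omega, hε0, by norm_num, by norm_num, ?_⟩
  intro E r₀ hEne h0E hcube hr₀0 hr₀1 hpor N hN
  have hkk : 1 + (m - 1) = m := by omega
  rw [hkk] at hN
  -- boundedness
  have hEsub : E ⊆ closedBall (0 : En n) n := by
    intro x hx
    rw [mem_closedBall, dist_zero_right]
    have h1 : ‖x‖ = Real.sqrt (∑ i, ‖x i‖^2) := by
      rw [EuclideanSpace.norm_eq]
    rw [h1]
    have h2 : (∑ i, ‖x i‖^2) ≤ (n:ℝ) := by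
      calc (∑ i, ‖x i‖^2) ≤ ∑ _i : Fin n, (1:ℝ) := by
            refine Finset.sum_le_sum fun i _ => ?_
            have := hcube x hx i
            rw [Real.norm_eq_abs, sq_abs]
            nlinarith [this.1, this.2]
        _ = n := by simp
    calc Real.sqrt (∑ i, ‖x i‖^2) ≤ Real.sqrt ((n:ℝ)^2) := by
          refine Real.sqrt_le_sqrt ?_
          have hn1 : (1:ℝ) ≤ n := by exact_mod_cast hn
          nlinarith
      _ = n := Real.sqrt_sq (by positivity)
  have hEbd : Bornology.IsBounded E := (isBounded_closedBall).subset hEsub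
  -- dyadic powers
  have hdy : ∀ t : ℕ, ((1/2:ℝ))^t = (2:ℝ)^(-(t:ℤ)) := fun t => by
    rw [zpow_neg, zpow_natCast, one_div, inv_pow]
  have hρpow : ∀ t : ℕ, ρ₀ ^ t = (2:ℝ)^(-((m₀*t : ℕ) : ℤ)) := fun t => by
    rw [hρ₀def, ← pow_mul, hdy]
  -- scales
  have hscale : ∀ t : ℕ, t ≤ (N+1)*s → r₀ ≤ ρ₀ ^ t := by
    intro t ht
    rw [hρpow]
    refine hN.trans ?_
    refine zpow_le_zpow_right₀ one_le_two ?_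
    have : m₀ * t ≤ (N+1) * m := by
      calc m₀ * t ≤ m₀ * ((N+1)*s) := Nat.mul_le_mul_left _ ht
        _ = (N+1)*m := by rw [hmdef]; ring
    omega
  -- porosity step
  have porstep : ∀ r : ℝ, r₀ ≤ r → ∀ x ∈ E, a' * r < porosityAt E x r := by
    intro r hr x hx
    have hrpos : 0 < r := lt_of_lt_of_le hr₀0 hr
    have := hpor x hx r hr
    have h2 : a * r < porosityAt E x r := (lt_div_iff₀ hrpos).1 this
    have : a' * r ≤ a * r := by
      refine mul_le_mul_of_nonneg_right (min_le_left _ _) hrpos.le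
    linarith
  -- the chain
  have chain : ∀ t : ℕ, t ≤ (N+1)*s →
      volume (thickening (ρ₀^t) E) ≤
        ENNReal.ofReal (b^t * (((n:ℝ)+1)^n * ωr)) := by
    have hV : volume (thickening 1 E) ≤ ENNReal.ofReal (((n:ℝ)+1)^n * ωr) := by
      have hsub : thickening 1 E ⊆ closedBall (0:En n) ((n:ℝ)+1) := by
        intro z hz
        obtain ⟨x, hxE, hzx⟩ := mem_thickening_iff.1 hz
        rw [mem_closedBall, dist_zero_right]
        have := hEsub hxE
        rw [mem_closedBall, dist_zero_right] at this
        have hzx' : ‖z - x‖ < 1 := by rwa [← dist_eq_norm]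
        calc ‖z‖ = ‖z - x + x‖ := by rw [sub_add_cancel]
          _ ≤ ‖z - x‖ + ‖x‖ := norm_add_le _ _
          _ ≤ 1 + n := by linarith
          _ = (n:ℝ)+1 := by ring
      refine (measure_mono hsub).trans ?_
      rw [Measure.addHaar_closedBall _ _ (by positivity : (0:ℝ) ≤ (n:ℝ)+1),
        finrank_euclideanSpace_fin, ← ENNReal.ofReal_toReal measure_ball_lt_top.ne,
        ← ENNReal.ofReal_mul (by positivity)]
    intro t ht
    induction t with
    | zero => simpa [pow_zero] using hV
    | succ t ih =>
      have ht' : t ≤ (N+1)*s := by omega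
      have hstep := decay_step hn ha'0 ha'1 hEbd (pow_pos hρ₀pos t) hρ₀pos hρ₀le
        (porstep (ρ₀^t) (hscale t ht'))
      calc volume (thickening (ρ₀^(t+1)) E)
          = volume (thickening (ρ₀ * ρ₀^t) E) := by rw [pow_succ, mul_comm]
        _ ≤ ENNReal.ofReal (1 - δ) * volume (thickening (ρ₀^t) E) := hstep
        _ ≤ ENNReal.ofReal b * ENNReal.ofReal (b^t * (((n:ℝ)+1)^n * ωr)) :=
            mul_le_mul_right (ih ht') _
        _ = ENNReal.ofReal (b^(t+1) * (((n:ℝ)+1)^n * ωr)) := by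
            rw [← ENNReal.ofReal_mul hb0.le]; ring_nf
  constructor
  · -- part (i): volume decay
    rw [show (1 + (m - 1) : ℕ) = m from hkk]
    have hple : (2:ℝ)^(-(m:ℤ)) ≤ 1/4 := by
      rw [← hdy]
      calc ((1:ℝ)/2)^m ≤ (1/2:ℝ)^2 :=
            pow_le_pow_of_le_one (by norm_num) (by norm_num) hm2
        _ = 1/4 := by norm_num
    have hp2 : (0:ℝ) < 2^(-(m:ℤ)) := by positivity
    set p : ℝ := 1 - 2^(-(m:ℤ)) with hpdef
    have hp34 : 3/4 ≤ p := by simp only [hpdef]; linarith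
    have hCC : (1:ℝ) ≤ C₀ * C₂ := one_le_mul_of_one_le_of_one_le hC₀1 hC₂1
    have hq : b^s ≤ p := by
      have : (1:ℝ)/(8*C₀*C₂) ≤ 1/8 := by
        rw [div_le_div_iff₀ (by positivity) (by norm_num)]
        nlinarith
      linarith [hbs']
    have hq2 : C₀ * b^s ≤ p := by
      have h1 : C₀ * b^s ≤ C₀ * (1/(8*C₀*C₂)) :=
        mul_le_mul_of_nonneg_left hbs' (by linarith)
      have h2 : C₀ * (1/(8*C₀*C₂)) = 1/(8*C₂) := by
        field_simp
      have h3 : (1:ℝ)/(8*C₂) ≤ 1/8 := by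
        rw [div_le_div_iff₀ (by positivity) (by norm_num)]
        nlinarith
      linarith
    cases N with
    | zero => simpa using cube_vol_le hcube
    | succ M =>
      have h1 : volume E ≤ volume (thickening (ρ₀^((M+1)*s)) E) :=
        measure_mono (self_subset_thickening (pow_pos hρ₀pos _) E)
      have h2 := chain ((M+1)*s)
        (Nat.mul_le_mul_right s (by omega : (M+1) ≤ (M+1)+1))
      refine (h1.trans h2).trans (ENNReal.ofReal_le_ofReal ?_)
      have hC : ((n:ℝ)+1)^n * ωr ≤ C₀ := le_max_right _ _
      calc b^((M+1)*s) * (((n:ℝ)+1)^n * ωr)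
          ≤ b^((M+1)*s) * C₀ :=
            mul_le_mul_of_nonneg_left hC (pow_nonneg hb0.le _)
        _ = (C₀ * b^s) * (b^s)^M := by
            rw [mul_comm (M+1) s, pow_mul, pow_succ]
            ring
        _ ≤ p * p^M := by
            refine mul_le_mul hq2 (pow_le_pow_left₀ (pow_nonneg hb0.le _) hq M)
              (pow_nonneg (pow_nonneg hb0.le _) _) (by linarith)
        _ = p^(M+1) := by rw [pow_succ]; ring
  · -- part (ii): pre-Minkowski content decay
    set R : ℝ := ρ₀^((N+1)*s) with hRdef
    have hRr₀ : r₀ ≤ R := hscale _ le_rfl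
    have hR0 : 0 < R := pow_pos hρ₀pos _
    obtain ⟨X, hXE, hXcov, hXb⟩ := counting_step hn hEbd hR0
    have hcR := chain ((N+1)*s) le_rfl
    have hcard : (X.card : ℝ) * ((R/6)^n * ωr) ≤ b^((N+1)*s) * (((n:ℝ)+1)^n * ωr) := by
      have h1 : (X.card : ℝ≥0∞) * (ENNReal.ofReal ((R/6)^n) * volume (ball (0:En n) 1))
          = ENNReal.ofReal ((X.card:ℝ) * ((R/6)^n * ωr)) := by
        rw [← ENNReal.ofReal_natCast X.card,
          ← ENNReal.ofReal_toReal (measure_ball_lt_top (x := (0:En n)) (r := 1)).ne,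
          ← ENNReal.ofReal_mul (pow_nonneg (div_nonneg hR0.le (by norm_num)) _),
          ← ENNReal.ofReal_mul (Nat.cast_nonneg _)]
      have h2 := (hXb.trans hcR)
      rw [h1] at h2
      exact (ENNReal.ofReal_le_ofReal_iff (mul_nonneg (pow_nonneg hb0.le _) (by positivity))).1 h2
    have hsInf : minkPreContent n ((n:ℝ) - ε) r₀ E ≤ (X.card : ℝ) * R ^ ((n:ℝ) - ε) := by
      refine csInf_le ⟨0, ?_⟩ ⟨R, X, hRr₀, hXE, hXcov, rfl⟩
      rintro t ⟨r, Y, hr, hYE, hYcov, rfl⟩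
      have hrpos : (0:ℝ) < r := lt_of_lt_of_le hr₀0 hr
      exact mul_nonneg (Nat.cast_nonneg _) (Real.rpow_nonneg hrpos.le ((n:ℝ) - ε))
    refine hsInf.trans ?_
    -- Step A : card * R^n ≤ b^((N+1)s) * C₂
    have hstepA : (X.card : ℝ) * R^n ≤ b^((N+1)*s) * C₂ := by
      have hC : ((n:ℝ)+1)^n * ωr ≤ C₀ := le_max_right _ _
      have e1 : (X.card : ℝ) * R^n = ((X.card : ℝ) * ((R/6)^n * ωr)) * (6^n/ωr) := by
        rw [div_pow]
        field_simp
      rw [e1]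
      calc ((X.card : ℝ) * ((R/6)^n * ωr)) * (6^n/ωr)
          ≤ (b^((N+1)*s) * (((n:ℝ)+1)^n * ωr)) * (6^n/ωr) :=
            mul_le_mul_of_nonneg_right hcard (div_nonneg (by positivity) hω0.le)
        _ = b^((N+1)*s) * ((((n:ℝ)+1)^n * ωr) * (6^n/ωr)) := by ring
        _ ≤ b^((N+1)*s) * C₂ := by
            refine mul_le_mul_of_nonneg_left ?_ (pow_nonneg hb0.le _)
            calc (((n:ℝ)+1)^n * ωr) * (6^n/ωr) ≤ C₀ * (6^n/ωr) := by
                  refine mul_le_mul_of_nonneg_right hC (div_nonneg (by positivity) hω0.le)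
              _ = C₀ * 6^n / ωr := by ring
              _ ≤ C₂ := le_max_right _ _
    -- Step B : split the rpow
    have hsplit : R ^ ((n:ℝ) - ε) = R^n * R ^ (-ε) := by
      rw [show ((n:ℝ) - ε) = (n:ℝ) + (-ε) by ring, Real.rpow_add hR0,
        Real.rpow_natCast]
    -- Step C : R^(-ε) = b⁻¹ ^ (N+1)
    have hmε : (m:ℝ) * ε = Real.logb 2 b⁻¹ := by
      rw [hεdef]
      field_simp
    have hRint : R = (2:ℝ) ^ (((-(((N+1)*m : ℕ) : ℤ)) : ℤ) : ℝ) := by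
      rw [hRdef, hρpow, show (m₀*((N+1)*s) : ℕ) = ((N+1)*m : ℕ) by rw [hmdef]; ring,
        Real.rpow_intCast]
    have hstepC : R ^ (-ε) = (b⁻¹) ^ (N+1) := by
      rw [hRint, ← Real.rpow_mul (by norm_num : (0:ℝ) ≤ 2)]
      have e2 : (((-(((N+1)*m : ℕ) : ℤ)) : ℤ) : ℝ) * (-ε) = Real.logb 2 b⁻¹ * ((N+1 : ℕ) : ℝ) := by
        push_cast
        rw [show -(((N:ℝ) + 1) * (m:ℝ)) * -ε = ((N:ℝ)+1) * ((m:ℝ) * ε) by ring, hmε]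
        ring
      rw [e2, Real.rpow_mul (by norm_num : (0:ℝ) ≤ 2), Real.rpow_logb two_pos
        (by norm_num) (inv_pos.2 hb0), Real.rpow_natCast]
    -- Step D : conclude
    have hbb : b^s * b⁻¹ = b^(s-1) := by
      have hs1 : s - 1 + 1 = s := by omega
      have hbs2 : b^s = b^(s-1) * b := by rw [← pow_succ, hs1]
      rw [hbs2, mul_assoc, mul_inv_cancel₀ hb0.ne', mul_one]
    have hCC : (1:ℝ) ≤ C₀ * C₂ := one_le_mul_of_one_le_of_one_le hC₀1 hC₂1
    have h18 : (1:ℝ)/(8*C₀*C₂) ≤ 1/8 := by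
      rw [div_le_div_iff₀ (by positivity) (by norm_num)]
      nlinarith
    have hA : C₂ * b^(s-1) ≤ 1/2 := by
      have h1 : C₂ * b^(s-1) ≤ C₂ * (1/(8*C₀*C₂)) :=
        mul_le_mul_of_nonneg_left hbs (by linarith)
      have h2 : C₂ * (1/(8*C₀*C₂)) = 1/(8*C₀) := by
        field_simp
      have h3 : (1:ℝ)/(8*C₀) ≤ 1/8 := by
        rw [div_le_div_iff₀ (by positivity) (by norm_num)]
        nlinarith
      linarith
    have hB : b^(s-1) ≤ 1/2 := by
      have : (1:ℝ) ≤ C₂ := hC₂1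
      nlinarith [hbs, h18, pow_nonneg hb0.le (s-1)]
    calc (X.card : ℝ) * R ^ ((n:ℝ) - ε)
        = ((X.card : ℝ) * R^n) * R^(-ε) := by rw [hsplit]; ring
      _ ≤ (b^((N+1)*s) * C₂) * R^(-ε) := by
          refine mul_le_mul_of_nonneg_right hstepA (Real.rpow_nonneg hR0.le _)
      _ = C₂ * ((b^s)^(N+1) * b⁻¹^(N+1)) := by
          rw [hstepC, show ((N+1)*s) = s*(N+1) by ring, pow_mul]
          ring
      _ = C₂ * (b^(s-1))^(N+1) := by rw [← mul_pow, hbb]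
      _ = (C₂ * b^(s-1)) * (b^(s-1))^N := by rw [pow_succ]; ring
      _ ≤ (1/2) * (1/2)^N := by
          refine mul_le_mul hA (pow_le_pow_left₀ (pow_nonneg hb0.le _) hB N)
            (pow_nonneg (pow_nonneg hb0.le _) _) (by norm_num)
      _ ≤ (1 - 1/2)^N := by
          have hpow : (0:ℝ) ≤ (1/2:ℝ)^N := by positivity
          norm_num
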